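/- For each pair of nonnegative integers i, m there exists a constant A_{i,m} such that 2F~_i^m(x,y) ≡ A_{i,m}·(x+2m+i)_{3m+2i+1}·(x+m−1/2)_m ≡ −A_{i,m}·(y+2m+i)_{3m+2i+1}·(y+m−1/2)_m modulo the ideal generated by (x+y+m) in the polynomial ring. -/

import Mathlib

open MvPolynomial

/-- Falling factorial `(a)_k = a(a-1)⋯(a-k+1)`. -/
noncomputable def ff {R : Type*} [CommRing R] (a : R) (k : ℕ) : R :=
  ∏ j ∈ Finset.range k, (a - (j : R))

/-- `F2 i m = 2·F̃ᵢᵐ(x,y)` as a polynomial in `ℚ[x,y]`, with `x = X 0`, `y = X 1`. -/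
noncomputable def F2 (i m : ℕ) : MvPolynomial (Fin 2) ℚ :=
  ∑ u ∈ Finset.range (m+1),
    C ((m.choose u : ℚ) * (-1)^u * (m.factorial : ℚ) / ff ((m:ℚ) + i + u + 1/2) (m+1))
      * ff (X 0 + C ((m:ℚ) + i + u)) (2*m+2*i+2*u+1)
      * ff (X 1 + C ((m:ℚ) + i)) (m-u)
      * ff (X 1 - C ((i:ℚ) + u + 1)) (m-u)

/-!
Modulo `x + y + m` we may put `y = -x - m`, so both congruences are statements about the
univariate polynomial `P(x) = 2F̃(x, -x - m)`, of degree at most `4m + 2i + 1`. `P` vanishes at the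
`3m + 2i + 1` integers `x = j - 2m - i`, where every summand contains a falling factorial `(n)_k`
with `0 ≤ n < k`, and at the `m` half-integers `x = r - m + 1/2`: there the `u`-th summand is
`(-1)^u binom(m,u)` times a fixed multiple of `Q(u)`, for a polynomial `Q` of degree `< m`, because
both satisfy the same first-order recurrence in `u`; so the sum is an `m`-th finite difference of
`Q` and vanishes. These `4m + 2i + 1` points are the simple roots of the monic polynomial
`G(x) = (x+2m+i)_{3m+2i+1} (x+m-1/2)_m`, hence `P = A G`, and the second congruence follows from
`G(-y - m) = -G(y)`.
-/

section FallingFactorial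

variable {R : Type*} [CommRing R]

theorem ff_eq_eval_descPochhammer (a : R) (k : ℕ) : ff a k = (descPochhammer R k).eval a := by
  induction k with
  | zero => simp [ff]
  | succ k ih => rw [ff, Finset.prod_range_succ, ← ff, ih, descPochhammer_succ_eval]

theorem ff_succ_right (a : R) (k : ℕ) : ff a (k + 1) = ff a k * (a - k) :=
  Finset.prod_range_succ _ _

theorem ff_succ_left (a : R) (k : ℕ) : ff a (k + 1) = a * ff (a - 1) k := by
  simp [ff_eq_eval_descPochhammer, descPochhammer_succ_left, Polynomial.eval_comp]

theorem ff_add_one_mul (a : R) (k : ℕ) : ff (a + 1) k * (a + 1 - k) = (a + 1) * ff a k := by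
  rw [← ff_succ_right, ff_succ_left, add_sub_cancel_right]

theorem ff_neg (a : R) (k : ℕ) : ff (-a) k = (-1) ^ k * ff (a + k - 1) k := by
  rw [ff_eq_eval_descPochhammer, ff_eq_eval_descPochhammer, descPochhammer_eval_eq_ascPochhammer,
    ← ascPochhammer_eval_neg_eq_descPochhammer]
  ring_nf

theorem ff_natCast_eq_zero {n k : ℕ} (h : n < k) : ff (n : R) k = 0 := by
  rw [ff_eq_eval_descPochhammer, descPochhammer_eval_eq_descFactorial,
    Nat.descFactorial_eq_zero_iff_lt.mpr h, Nat.cast_zero]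

theorem map_ff {S F : Type*} [CommRing S] [FunLike F R S] [RingHomClass F R S] (f : F) (a : R)
    (k : ℕ) : f (ff a k) = ff (f a) k := by
  simp [ff, map_prod]

open Polynomial in
theorem natDegree_ff_le {p : R[X]} {d : ℕ} (hp : p.natDegree ≤ d) (k : ℕ) :
    (ff p k).natDegree ≤ k * d := by
  induction k with
  | zero => simp [ff]
  | succ k ih =>
    rw [ff_succ_right, add_one_mul]
    refine natDegree_mul_le_of_le ih ((natDegree_sub_le _ _).trans (max_le hp ?_))
    simp

open Polynomial in
theorem monic_ff_and_natDegree {p : R[X]} (hp : p.Monic) (hp1 : 0 < p.natDegree) (k : ℕ) :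
    (ff p k).Monic ∧ (ff p k).natDegree = k * p.natDegree := by
  induction k with
  | zero => simp [ff]
  | succ k ih =>
    have hdeg : (k : R[X]).natDegree < p.natDegree := by rwa [natDegree_natCast]
    have hlin : (p - (k : R[X])).Monic := hp.sub_of_left (degree_lt_degree hdeg)
    rw [ff_succ_right]
    refine ⟨ih.1.mul hlin, ?_⟩
    rw [ih.1.natDegree_mul hlin, ih.2, natDegree_sub_eq_left_of_natDegree_lt hdeg, add_one_mul]

end FallingFactorial

theorem ne_zero_of_eq_int_add_half {q : ℚ} (z : ℤ) (hq : q = z + 1/2) : q ≠ 0 := by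
  rintro rfl
  have h2 : ((2 * z + 1 : ℤ) : ℚ) = 0 := by push_cast; linarith
  have := Int.cast_eq_zero.mp h2
  omega

theorem ff_ne_zero_of_eq_int_add_half {q : ℚ} (z : ℤ) (hq : q = z + 1/2) (k : ℕ) :
    ff q k ≠ 0 :=
  Finset.prod_ne_zero_iff.mpr fun j _ =>
    ne_zero_of_eq_int_add_half (z - j) (by rw [hq]; push_cast; ring)

theorem mul_eq_mul_of_same_recurrence {K : Type*} [Field K] {f g α β : ℕ → K} {n : ℕ}
    (hβ : ∀ u < n, β u ≠ 0) (hf : ∀ u < n, f (u + 1) * β u = α u * f u)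
    (hg : ∀ u < n, g (u + 1) * β u = α u * g u) : ∀ u ≤ n, f u * g 0 = f 0 * g u := by
  intro u hu
  induction u with
  | zero => rfl
  | succ u ih =>
    refine mul_right_cancel₀ (hβ u hu) ?_
    linear_combination g 0 * hf u hu - f 0 * hg u hu + α u * ih (by omega)

open Polynomial in
theorem Polynomial.sum_range_neg_one_pow_mul_choose_mul_eval_eq_zero {R : Type*} [CommRing R]
    {P : R[X]} {n : ℕ} (hP : P.natDegree < n) :
    ∑ k ∈ Finset.range (n + 1), (-1) ^ k * (n.choose k : R) * P.eval (k : R) = 0 := by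
  have h := congr_fun (fwdDiff_iter_eq_zero_of_degree_lt hP) 0
  rw [fwdDiff_iter_eq_sum_shift] at h
  calc ∑ k ∈ Finset.range (n + 1), (-1) ^ k * (n.choose k : R) * P.eval (k : R)
      = (-1) ^ n * ∑ k ∈ Finset.range (n + 1),
          ((-1 : ℤ) ^ (n - k) * n.choose k) • P.eval (0 + k • 1) := by
        rw [Finset.mul_sum]
        refine Finset.sum_congr rfl fun k hk => ?_
        have hk : k ≤ n := Nat.lt_succ_iff.mp (Finset.mem_range.mp hk)
        rw [← pow_sub_mul_pow (-1 : R) hk]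
        have : ((-1 : R) ^ (n - k)) * (-1) ^ (n - k) = 1 := by
          rw [← pow_add, Even.neg_one_pow ⟨n - k, rfl⟩]
        simp only [zsmul_eq_mul, Int.cast_mul, Int.cast_pow, Int.cast_neg, Int.cast_one,
          Int.cast_natCast, nsmul_eq_mul, mul_one, zero_add]
        linear_combination -(-1) ^ k * (n.choose k : R) * P.eval (k : R) * this
    _ = 0 := by rw [h, Pi.zero_apply, mul_zero]

open Polynomial in
theorem Polynomial.eq_C_coeff_mul_of_eval_eq_zero {R : Type*} [CommRing R] [IsDomain R]
    {P G : R[X]} (s : Finset R) (hG : G.Monic) (hPG : P.natDegree ≤ G.natDegree)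
    (hGs : G.natDegree ≤ s.card) (hP : ∀ x ∈ s, P.eval x = 0)
    (hG0 : ∀ x ∈ s, G.eval x = 0) :
    P = C (P.coeff G.natDegree) * G := by
  refine eq_of_degree_sub_lt_of_eval_finset_eq s ?_ fun x hx => by simp [hP x hx, hG0 x hx]
  refine lt_of_lt_of_le ((degree_lt_iff_coeff_zero _ _).mpr fun k hk => ?_) (by exact_mod_cast hGs)
  rcases hk.eq_or_lt with rfl | hlt
  · simp [hG.coeff_natDegree]
  · simp [coeff_eq_zero_of_natDegree_lt hlt, coeff_eq_zero_of_natDegree_lt (hPG.trans_lt hlt)]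

theorem MvPolynomial.mem_span_of_aeval_eq_zero {R : Type*} [CommRing R] (c : R)
    {p : MvPolynomial (Fin 2) R}
    (hp : aeval ![Polynomial.X, -Polynomial.X - Polynomial.C c] p = 0) :
    p ∈ Ideal.span {X 0 + X 1 + C c} := by
  set I : Ideal (MvPolynomial (Fin 2) R) := Ideal.span {X 0 + X 1 + C c}
  have hmk : ((Ideal.Quotient.mkₐ R I).comp (Polynomial.aeval (X 0))).comp
      (aeval ![Polynomial.X, -Polynomial.X - Polynomial.C c]) = Ideal.Quotient.mkₐ R I := by
    refine algHom_ext fun n => ?_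
    fin_cases n
    · simp
    · simp only [AlgHom.comp_apply, aeval_X]
      rw [Ideal.Quotient.mkₐ_eq_mk, Ideal.Quotient.eq]
      convert I.neg_mem (Ideal.mem_span_singleton_self (X 0 + X 1 + C c)) using 1
      change Polynomial.aeval (X 0) (-Polynomial.X - Polynomial.C c) - X 1 = _
      rw [map_sub, map_neg, Polynomial.aeval_X, Polynomial.aeval_C, algebraMap_eq]
      ring
  rw [← Ideal.Quotient.eq_zero_iff_mem, ← Ideal.Quotient.mkₐ_eq_mk R, ← hmk]
  simp [hp]

section Restriction

variable {K L : Type*} [CommRing K] [Algebra ℚ K] [CommRing L] [Algebra ℚ L] (i m : ℕ)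

/-- `F2` and `G` evaluated at points of an arbitrary `ℚ`-algebra, so that substituting `y = -x - m`
and evaluating at a rational are both instances of `map_F2At`. -/
noncomputable def F2At (x y : K) : K :=
  ∑ u ∈ Finset.range (m+1),
    algebraMap ℚ K
        ((m.choose u : ℚ) * (-1)^u * (m.factorial : ℚ) / ff ((m:ℚ) + i + u + 1/2) (m+1))
      * ff (x + algebraMap ℚ K ((m:ℚ) + i + u)) (2*m+2*i+2*u+1)
      * ff (y + algebraMap ℚ K ((m:ℚ) + i)) (m-u)
      * ff (y - algebraMap ℚ K ((i:ℚ) + u + 1)) (m-u)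

noncomputable def GAt (x : K) : K :=
  ff (x + algebraMap ℚ K (2*(m:ℚ) + i)) (3*m+2*i+1)
    * ff (x + algebraMap ℚ K ((m:ℚ) - 1/2)) m

theorem F2_eq_F2At : F2 i m = F2At i m (X 0) (X 1) := rfl

theorem GAt_mvPolynomial {σ : Type*} (x : MvPolynomial σ ℚ) :
    GAt i m x = ff (x + C (2*(m:ℚ) + i)) (3*m+2*i+1) * ff (x + C ((m:ℚ) - 1/2)) m := rfl

theorem map_F2At (φ : K →ₐ[ℚ] L) (x y : K) : φ (F2At i m x y) = F2At i m (φ x) (φ y) := by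
  simp [F2At, map_ff]

theorem map_GAt (φ : K →ₐ[ℚ] L) (x : K) : φ (GAt i m x) = GAt i m (φ x) := by
  simp [GAt, map_ff]

theorem GAt_neg_sub (x : K) : GAt i m (-x - (m : K)) = -GAt i m x := by
  have h₁ : -x - (m : K) + algebraMap ℚ K (2 * m + i) = -(x - algebraMap ℚ K (m + i)) := by
    simp only [map_add, map_mul, map_ofNat, map_natCast]; ring
  have h₂ : -x - (m : K) + algebraMap ℚ K (m - 1/2) = -(x + algebraMap ℚ K (1/2)) := by
    simp only [map_sub, map_natCast]; ring
  have h₃ : x - algebraMap ℚ K (m + i) + ((3 * m + 2 * i + 1 : ℕ) : K) - 1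
      = x + algebraMap ℚ K (2 * m + i) := by
    simp only [map_add, map_mul, map_natCast, map_ofNat]; push_cast; ring
  have h₄ : x + algebraMap ℚ K (1/2) + (m : K) - 1 = x + algebraMap ℚ K (m - 1/2) := by
    have h : algebraMap ℚ K (1/2) + algebraMap ℚ K (1/2) = 1 := by rw [← map_add]; norm_num
    rw [map_sub, map_natCast]
    linear_combination h
  have hsign : (-1 : K) ^ (3 * m + 2 * i + 1) * (-1) ^ m = -1 := by
    rw [← pow_add, show 3 * m + 2 * i + 1 + m = 2 * (2 * m + i) + 1 by ring, pow_succ, pow_mul,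
      neg_one_sq, one_pow, one_mul]
  calc GAt i m (-x - (m : K))
      = ((-1) ^ (3 * m + 2 * i + 1) * (-1) ^ m) * GAt i m x := by
        rw [GAt, GAt, h₁, h₂, ff_neg, ff_neg, h₃, h₄]; ring
    _ = -GAt i m x := by rw [hsign, neg_one_mul]

end Restriction

section Line

open scoped Polynomial

variable (i m : ℕ)

theorem monic_GAt_X_and_natDegree : (GAt i m (Polynomial.X : ℚ[X])).Monic ∧
    (GAt i m (Polynomial.X : ℚ[X])).natDegree = 4 * m + 2 * i + 1 := by
  have h (c : ℚ) (k : ℕ) := monic_ff_and_natDegree (Polynomial.monic_X_add_C c)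
    (by rw [Polynomial.natDegree_X_add_C]; exact one_pos) k
  simp only [Polynomial.natDegree_X_add_C, mul_one] at h
  rw [GAt, Polynomial.algebraMap_eq, (h _ _).1.natDegree_mul (h _ _).1, (h _ _).2, (h _ _).2]
  exact ⟨(h _ _).1.mul (h _ _).1, by ring⟩

theorem natDegree_F2At_X_le :
    (F2At i m Polynomial.X (-Polynomial.X - Polynomial.C (m : ℚ))).natDegree
      ≤ 4 * m + 2 * i + 1 := by
  refine Polynomial.natDegree_sum_le_of_forall_le _ _ fun u hu => ?_
  have hu : u ≤ m := Nat.lt_succ_iff.mp (Finset.mem_range.mp hu)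
  rw [Polynomial.algebraMap_eq]
  refine (Polynomial.natDegree_mul_le_of_le (Polynomial.natDegree_mul_le_of_le
    (Polynomial.natDegree_mul_le_of_le (Polynomial.natDegree_C _).le
      (natDegree_ff_le (d := 1) (by compute_degree) _))
    (natDegree_ff_le (d := 1) (by compute_degree) _))
    (natDegree_ff_le (d := 1) (by compute_degree) _)).trans ?_
  omega

theorem eval_F2At_X (s : ℚ) :
    (F2At i m Polynomial.X (-Polynomial.X - Polynomial.C (m : ℚ))).eval s
      = F2At i m s (-s - m) := by
  rw [← Polynomial.coe_aeval_eq_eval, map_F2At]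
  simp

theorem eval_GAt_X (s : ℚ) : (GAt i m (Polynomial.X : ℚ[X])).eval s = GAt i m s := by
  rw [← Polynomial.coe_aeval_eq_eval, map_GAt, Polynomial.aeval_X]

end Line

section HalfRoot

open scoped Polynomial

variable (i m r : ℕ)

/-- The `u`-th summand of `F2At i m x (-x - m)` at `x = r - m + 1/2`, divided by
`(-1)^u binom(m,u) m!`. -/
noncomputable def halfRootTerm (u : ℕ) : ℚ :=
  ff ((r : ℚ) + i + u + 1/2) (2*m+2*i+2*u+1) * ff ((m : ℚ) + i - r - 1/2) (m-u)
    * ff (-(r : ℚ) - i - u - 3/2) (m-u) / ff ((m : ℚ) + i + u + 1/2) (m+1)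

theorem halfRootTerm_succ_mul {u : ℕ} (hu : u < m) :
    halfRootTerm i m r (u + 1) * ((u + i - r + 1/2) * (u + m + i + 3/2))
      = ((u + i + 1/2) * (u + 2*m + i - r + 1/2)) * halfRootTerm i m r u := by
  obtain ⟨n, hn⟩ : ∃ n, m - u = n + 1 := ⟨m - u - 1, by omega⟩
  have hn' : m - (u + 1) = n := by omega
  have hnq : (n : ℚ) + 1 + u = m := by exact_mod_cast (by omega : n + 1 + u = m)
  have e1 : ff ((r : ℚ) + i + ↑(u + 1) + 1/2) (2*m+2*i+2*(u+1)+1)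
      = ((r : ℚ) + i + u + 3/2) * (r - 2*m - i - u - 1/2)
        * ff ((r : ℚ) + i + u + 1/2) (2*m+2*i+2*u+1) := by
    rw [show (r : ℚ) + i + ↑(u + 1) + 1/2 = ((r : ℚ) + i + u + 1/2) + 1 by push_cast; ring,
      show 2*m+2*i+2*(u+1)+1 = (2*m+2*i+2*u+1) + 1 + 1 by ring, ff_succ_left, add_sub_cancel_right,
      ff_succ_right]
    push_cast; ring
  have e2 : ff ((m : ℚ) + i - r - 1/2) (n + 1)
      = ff ((m : ℚ) + i - r - 1/2) n * (u + i - r + 1/2) := by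
    rw [ff_succ_right]; congr 1; linear_combination -hnq
  have e3 : ff (-(r : ℚ) - i - u - 3/2) (n + 1)
      = (-(r : ℚ) - i - u - 3/2) * ff (-(r : ℚ) - i - ↑(u + 1) - 3/2) n := by
    rw [ff_succ_left]; congr 2; push_cast; ring
  have e4 : ff ((m : ℚ) + i + ↑(u + 1) + 1/2) (m + 1) * (u + i + 1/2)
      = (u + m + i + 3/2) * ff ((m : ℚ) + i + u + 1/2) (m + 1) := by
    have h := ff_add_one_mul ((m : ℚ) + i + u + 1/2) (m + 1)
    rw [show (m : ℚ) + i + u + 1/2 + 1 = m + i + ↑(u + 1) + 1/2 by push_cast; ring] at h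
    push_cast at h ⊢
    linear_combination h
  have hD (v : ℕ) : ff ((m : ℚ) + i + v + 1/2) (m + 1) ≠ 0 := by
    exact ff_ne_zero_of_eq_int_add_half (m + i + v) (by push_cast; ring) (m + 1)
  simp only [halfRootTerm, hn, hn', e1, e2, e3]
  rw [div_mul_eq_mul_div, mul_div_assoc', div_eq_div_iff (hD _) (hD _)]
  linear_combination ((r : ℚ) + i + u + 3/2) * (u + 2*m + i - r + 1/2) * (u + i - r + 1/2)
    * ff ((r : ℚ) + i + u + 1/2) (2*m+2*i+2*u+1) * ff ((m : ℚ) + i - r - 1/2) n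
    * ff (-(r : ℚ) - i - ↑(u + 1) - 3/2) n * e4

noncomputable def halfRootPoly : ℚ[X] :=
  ff (Polynomial.X + Polynomial.C ((i : ℚ) - 1/2)) r
    * ff (Polynomial.X + Polynomial.C (2*(m : ℚ) + i - r - 1/2)) (m - r - 1)

theorem natDegree_halfRootPoly_lt (hr : r < m) : (halfRootPoly i m r).natDegree < m := by
  refine (Polynomial.natDegree_mul_le_of_le (natDegree_ff_le (d := 1) (by compute_degree) _)
    (natDegree_ff_le (d := 1) (by compute_degree) _)).trans_lt ?_
  omega

theorem eval_halfRootPoly (x : ℚ) :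
    (halfRootPoly i m r).eval x
      = ff (x + (i - 1/2)) r * ff (x + (2*m + i - r - 1/2)) (m - r - 1) := by
  simp only [halfRootPoly, Polynomial.eval_mul, ← Polynomial.coe_evalRingHom, map_ff]
  simp only [Polynomial.coe_evalRingHom, Polynomial.eval_add, Polynomial.eval_X, Polynomial.eval_C]

theorem eval_halfRootPoly_succ_mul (hr : r < m) (u : ℕ) :
    (halfRootPoly i m r).eval ↑(u + 1) * ((u + i - r + 1/2) * (u + m + i + 3/2))
      = ((u + i + 1/2) * (u + 2*m + i - r + 1/2)) * (halfRootPoly i m r).eval (u : ℚ) := by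
  have h₁ := ff_add_one_mul ((u : ℚ) + (i - 1/2)) r
  have h₂ := ff_add_one_mul ((u : ℚ) + (2*m + i - r - 1/2)) (m - r - 1)
  have hc : ((m - r - 1 : ℕ) : ℚ) = m - r - 1 := by
    rw [Nat.cast_sub (by omega), Nat.cast_sub hr.le]; push_cast; ring
  rw [eval_halfRootPoly, eval_halfRootPoly]
  rw [hc] at h₂
  push_cast
  rw [add_right_comm (u : ℚ) 1, add_right_comm (u : ℚ) 1]
  linear_combination
    (ff ((u : ℚ) + (2*m + i - r - 1/2) + 1) (m - r - 1) * (u + m + i + 3/2)) * h₁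
    + ((u + i + 1/2) * ff ((u : ℚ) + (i - 1/2)) r) * h₂

theorem F2At_half_root (hr : r < m) :
    F2At i m ((r : ℚ) - (m - 1/2)) (-((r : ℚ) - (m - 1/2)) - m) = 0 := by
  have hβ : ∀ u < m, ((u : ℚ) + i - r + 1/2) * (u + m + i + 3/2) ≠ 0 := fun u _ =>
    mul_ne_zero (ne_zero_of_eq_int_add_half (u + i - r) (by push_cast; ring))
      (ne_zero_of_eq_int_add_half (u + m + i + 1) (by push_cast; ring))
  have hratio := mul_eq_mul_of_same_recurrence
    (g := fun u : ℕ => (halfRootPoly i m r).eval (u : ℚ)) hβ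
    (fun u hu => halfRootTerm_succ_mul i m r hu) (fun u _ => eval_halfRootPoly_succ_mul i m r hr u)
  have hg0 : (halfRootPoly i m r).eval ((0 : ℕ) : ℚ) ≠ 0 := by
    rw [eval_halfRootPoly, Nat.cast_zero, zero_add, zero_add]
    exact mul_ne_zero (ff_ne_zero_of_eq_int_add_half (i - 1) (by push_cast; ring) r)
      (ff_ne_zero_of_eq_int_add_half (2 * m + i - r - 1) (by push_cast; ring) (m - r - 1))
  rw [← mul_left_inj' hg0, zero_mul]
  calc F2At i m ((r : ℚ) - (m - 1/2)) (-((r : ℚ) - (m - 1/2)) - m)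
        * (halfRootPoly i m r).eval ((0 : ℕ) : ℚ)
      = (∑ u ∈ Finset.range (m + 1),
          (-1) ^ u * (m.choose u : ℚ) * (m.factorial * halfRootTerm i m r u))
        * (halfRootPoly i m r).eval ((0 : ℕ) : ℚ) := by
        congr 1
        refine Finset.sum_congr rfl fun u _ => ?_
        simp only [Algebra.algebraMap_self_apply, halfRootTerm]
        rw [show (r : ℚ) - (m - 1/2) + (m + i + u) = r + i + u + 1/2 by ring,
          show -((r : ℚ) - (m - 1/2)) - m + (m + i) = m + i - r - 1/2 by ring,
          show -((r : ℚ) - (m - 1/2)) - m - (i + u + 1) = -r - i - u - 3/2 by ring]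
        ring
    _ = m.factorial * halfRootTerm i m r 0 * ∑ u ∈ Finset.range (m + 1),
          (-1) ^ u * (m.choose u : ℚ) * (halfRootPoly i m r).eval (u : ℚ) := by
        rw [Finset.sum_mul, Finset.mul_sum]
        refine Finset.sum_congr rfl fun u hu => ?_
        linear_combination (-1) ^ u * (m.choose u : ℚ) * m.factorial
          * hratio u (Nat.lt_succ_iff.mp (Finset.mem_range.mp hu))
    _ = 0 := by
      rw [Polynomial.sum_range_neg_one_pow_mul_choose_mul_eval_eq_zero
        (natDegree_halfRootPoly_lt i m r hr), mul_zero]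

end HalfRoot

section Roots

variable (i m : ℕ)

theorem F2At_int_root {j : ℕ} (hj : j < 3 * m + 2 * i + 1) :
    F2At i m ((j : ℚ) - (2 * m + i)) (-((j : ℚ) - (2 * m + i)) - m) = 0 := by
  refine Finset.sum_eq_zero fun u hu => ?_
  have hu : u ≤ m := Nat.lt_succ_iff.mp (Finset.mem_range.mp hu)
  simp only [Algebra.algebraMap_self_apply]
  by_cases h : m ≤ j + u
  · rw [show (j : ℚ) - (2 * m + i) + (m + i + u) = ((j + u - m : ℕ) : ℚ) by
        rw [Nat.cast_sub h]; push_cast; ring,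
      ff_natCast_eq_zero (by omega)]
    ring
  · rw [show -((j : ℚ) - (2 * m + i)) - m - (i + u + 1) = ((m - (j + u + 1) : ℕ) : ℚ) by
        rw [Nat.cast_sub (by omega)]; push_cast; ring,
      ff_natCast_eq_zero (by omega), mul_zero]

theorem GAt_int_root {j : ℕ} (hj : j < 3 * m + 2 * i + 1) :
    GAt i m ((j : ℚ) - (2 * m + i)) = 0 := by
  rw [GAt, Algebra.algebraMap_self_apply, sub_add_cancel, ff_natCast_eq_zero hj, zero_mul]

theorem GAt_half_root {r : ℕ} (hr : r < m) : GAt i m ((r : ℚ) - (m - 1/2)) = 0 := by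
  rw [GAt, Algebra.algebraMap_self_apply, Algebra.algebraMap_self_apply, sub_add_cancel,
    ff_natCast_eq_zero hr, mul_zero]

theorem exists_F2At_X_eq_C_mul_GAt_X : ∃ A : ℚ,
    F2At i m Polynomial.X (-Polynomial.X - Polynomial.C (m : ℚ))
      = Polynomial.C A * GAt i m Polynomial.X := by
  set intRoots := (Finset.range (3 * m + 2 * i + 1)).image fun j : ℕ => (j : ℚ) - (2 * m + i)
  set halfRoots := (Finset.range m).image fun r : ℕ => (r : ℚ) - (m - 1/2)
  have hdisj : Disjoint intRoots halfRoots := by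
    simp only [intRoots, halfRoots, Finset.disjoint_left, Finset.mem_image]
    rintro _ ⟨j, -, rfl⟩ ⟨r, -, h⟩
    refine ne_zero_of_eq_int_add_half (r - j + m + i) (by push_cast; ring) (sub_eq_zero.mpr h)
  have hcard : (intRoots ∪ halfRoots).card = 4 * m + 2 * i + 1 := by
    have hinj (c : ℚ) : Function.Injective fun j : ℕ => (j : ℚ) - c :=
      sub_left_injective.comp Nat.cast_injective
    rw [Finset.card_union_of_disjoint hdisj, Finset.card_image_of_injective _ (hinj _),
      Finset.card_image_of_injective _ (hinj _), Finset.card_range, Finset.card_range]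
    ring
  obtain ⟨hmonic, hdeg⟩ := monic_GAt_X_and_natDegree i m
  refine ⟨_, Polynomial.eq_C_coeff_mul_of_eval_eq_zero (intRoots ∪ halfRoots) hmonic
    (hdeg ▸ natDegree_F2At_X_le i m) (hdeg.trans hcard.symm).le ?_ ?_⟩
  · simp only [eval_F2At_X, Finset.mem_union, intRoots, halfRoots, Finset.mem_image,
      Finset.mem_range]
    rintro _ (⟨j, hj, rfl⟩ | ⟨r, hr, rfl⟩)
    exacts [F2At_int_root i m hj, F2At_half_root i m r hr]
  · simp only [eval_GAt_X, Finset.mem_union, intRoots, halfRoots, Finset.mem_image,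
      Finset.mem_range]
    rintro _ (⟨j, hj, rfl⟩ | ⟨r, hr, rfl⟩)
    exacts [GAt_int_root i m hj, GAt_half_root i m hr]

end Roots

theorem stmt8 (i m : ℕ) :
    ∃ A : ℚ,
      F2 i m - C A * ff (X 0 + C (2*(m:ℚ) + i)) (3*m+2*i+1) * ff (X 0 + C ((m:ℚ) - 1/2)) m
          ∈ Ideal.span {X 0 + X 1 + C (m:ℚ)} ∧
      F2 i m + C A * ff (X 1 + C (2*(m:ℚ) + i)) (3*m+2*i+1) * ff (X 1 + C ((m:ℚ) - 1/2)) m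
          ∈ Ideal.span {(X 0 + X 1 + C (m:ℚ) : MvPolynomial (Fin 2) ℚ)} := by
  obtain ⟨A, hA⟩ := exists_F2At_X_eq_C_mul_GAt_X i m
  set φ : MvPolynomial (Fin 2) ℚ →ₐ[ℚ] Polynomial ℚ :=
    aeval ![Polynomial.X, -Polynomial.X - Polynomial.C (m : ℚ)]
  have hφ : φ (F2 i m) = Polynomial.C A * GAt i m Polynomial.X := by
    rw [F2_eq_F2At, map_F2At, ← hA]
    simp [φ]
  refine ⟨A, mem_span_of_aeval_eq_zero _ ?_, mem_span_of_aeval_eq_zero _ ?_⟩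
  · rw [mul_assoc, ← GAt_mvPolynomial, map_sub, map_mul, map_GAt, hφ]
    simp
  · rw [mul_assoc, ← GAt_mvPolynomial, map_add, map_mul, map_GAt, hφ]
    simp [GAt_neg_sub]
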